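/- For every integer n ≥ 2, the number of mutually abelian-bordered pairs (u,v) of binary words with |u| = |v| = n and lsb(u,v) + lsb(v,u) ≤ n equals Σ_{i=1}^{n−1} Σ_{j=1}^{n−i} D(2n−2i, j)·D(2i, i), where D(m,k) denotes the number of binary words of length m whose shortest abelian border has length exactly k. -/

import Mathlib

/-- Abelian equivalence of binary words; the alphabet `{a, b}` is encoded by
`Bool` with `a = true` and `b = false`. -/
def AbEq (x y : List Bool) : Prop :=
  x.count true = y.count true ∧ x.count false = y.count false

/-- `(x, y)` is an internal abelian-border of `(u, v)`: `x` is a nonempty proper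
suffix of `u`, `y` is a proper prefix of `v`, and `x ~ y`. -/
def IsIntBorder (u v x y : List Bool) : Prop :=
  x ≠ [] ∧ x ≠ u ∧ x <:+ u ∧ y <+: v ∧ y ≠ v ∧ AbEq x y

/-- `(x, y)` is an external abelian-border of `(u, v)`: `x` is a nonempty proper
prefix of `u`, `y` is a proper suffix of `v`, and `x ~ y`. -/
def IsExtBorder (u v x y : List Bool) : Prop :=
  x ≠ [] ∧ x ≠ u ∧ x <+: u ∧ y <:+ v ∧ y ≠ v ∧ AbEq x y

/-- `(u, v)` has an internal abelian-border. -/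
def HasIntB (u v : List Bool) : Prop := ∃ x y, IsIntBorder u v x y

/-- `(u, v)` has an external abelian-border. -/
def HasExtB (u v : List Bool) : Prop := ∃ x y, IsExtBorder u v x y

/-- `(u, v)` is mutually abelian-bordered. -/
def MAB (u v : List Bool) : Prop := HasIntB u v ∧ HasExtB u v

/-- `(u, v)` is mutually abelian-unbordered. -/
def MAU (u v : List Bool) : Prop := ¬ HasIntB u v ∧ ¬ HasExtB u v

/-- `lsb u v` is the length of the shortest internal abelian-border of `(u, v)`:
the least `t` with `1 ≤ t ≤ |u| - 1` such that the suffix of `u` of length `t`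
is abelian equivalent to the prefix of `v` of length `t`. -/
noncomputable def lsb (u v : List Bool) : ℕ :=
  sInf {t | 1 ≤ t ∧ t ≤ u.length - 1 ∧ AbEq (u.drop (u.length - t)) (v.take t)}

/-- The binary word `w` has shortest abelian border of length exactly `k`. -/
def ShortestAbBorder (w : List Bool) (k : ℕ) : Prop :=
  1 ≤ k ∧ k ≤ w.length - 1 ∧ AbEq (w.take k) (w.drop (w.length - k)) ∧
    ∀ t, 1 ≤ t → t < k → ¬ AbEq (w.take t) (w.drop (w.length - t))

/-- `D m k` is the number of binary words of length `m` whose shortest abelian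
border has length exactly `k`. -/
noncomputable def D (m k : ℕ) : ℕ :=
  {w : List Bool | w.length = m ∧ ShortestAbBorder w k}.ncard

/-! ### Auxiliary lemmas -/

lemma count_tf (l : List Bool) : l.count true + l.count false = l.length := by
  induction l with
  | nil => simp
  | cons a l ih => cases a <;> simp [List.count_cons] <;> omega

lemma AbEq.len {x y : List Bool} (h : AbEq x y) : x.length = y.length := by
  rw [← count_tf x, ← count_tf y, h.1, h.2]

lemma AbEq.symm' {x y : List Bool} (h : AbEq x y) : AbEq y x := ⟨h.1.symm, h.2.symm⟩

/-- The set of internal abelian-border lengths of `(u, v)`. -/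
def Tset (u v : List Bool) : Set ℕ :=
  {t | 1 ≤ t ∧ t ≤ u.length - 1 ∧ AbEq (u.drop (u.length - t)) (v.take t)}

lemma lsb_def (u v : List Bool) : lsb u v = sInf (Tset u v) := rfl

lemma hasIntB_iff {u v : List Bool} {n : ℕ} (hu : u.length = n) (hv : v.length = n)
    (hn : 1 ≤ n) : HasIntB u v ↔ (Tset u v).Nonempty := by
  subst hu
  constructor
  · rintro ⟨x, y, hxne, hxnu, hxsuf, hypre, hynv, hab⟩
    have hx1 : 0 < x.length := List.length_pos_iff.mpr hxne
    have hxle : x.length ≤ u.length := hxsuf.length_le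
    have hxne' : x.length ≠ u.length := fun h => hxnu (hxsuf.eq_of_length h)
    have hylen : y.length = x.length := hab.len.symm
    refine ⟨x.length, by omega, by omega, ?_⟩
    have hx : x = u.drop (u.length - x.length) := List.suffix_iff_eq_drop.mp hxsuf
    have hy : y = v.take x.length := by
      rw [List.prefix_iff_eq_take.mp hypre, hylen]
    rw [← hx, ← hy]; exact hab
  · rintro ⟨t, ht1, ht2, hab⟩
    refine ⟨u.drop (u.length - t), v.take t, ?_, ?_, List.drop_suffix _ _,
      List.take_prefix _ _, ?_, hab⟩
    · intro h
      have := congrArg List.length h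
      rw [List.length_drop, List.length_nil] at this
      omega
    · intro h
      have := congrArg List.length h
      rw [List.length_drop] at this
      omega
    · intro h
      have := congrArg List.length h
      rw [List.length_take] at this
      omega

lemma hasExtB_iff {u v : List Bool} {n : ℕ} (hu : u.length = n) (hv : v.length = n)
    (hn : 1 ≤ n) : HasExtB u v ↔ (Tset v u).Nonempty := by
  constructor
  · rintro ⟨x, y, hxne, hxnu, hxpre, hysuf, hynv, hab⟩
    have hx1 : 0 < x.length := List.length_pos_iff.mpr hxne
    have hxle : x.length ≤ u.length := hxpre.length_le
    have hxne' : x.length ≠ u.length := fun h => hxnu (hxpre.eq_of_length h)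
    have hylen : y.length = x.length := hab.len.symm
    refine ⟨x.length, by omega, by omega, ?_⟩
    have hy : y = v.drop (v.length - x.length) := by
      rw [List.suffix_iff_eq_drop.mp hysuf, hylen]
    have hx : x = u.take x.length := List.prefix_iff_eq_take.mp hxpre
    rw [← hy, ← hx]; exact hab.symm'
  · rintro ⟨t, ht1, ht2, hab⟩
    refine ⟨u.take t, v.drop (v.length - t), ?_, ?_, List.take_prefix _ _,
      List.drop_suffix _ _, ?_, hab.symm'⟩
    · intro h
      have := congrArg List.length h
      rw [List.length_take, List.length_nil] at this
      omega
    · intro h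
      have := congrArg List.length h
      rw [List.length_take] at this
      omega
    · intro h
      have := congrArg List.length h
      rw [List.length_drop] at this
      omega

lemma drop_app_sub {α : Type*} {a b : List α} {t : ℕ} (h : t ≤ b.length) :
    (a ++ b).drop ((a ++ b).length - t) = b.drop (b.length - t) := by
  have h1 : (a ++ b).length - t = a.length + (b.length - t) := by
    rw [List.length_append]; omega
  rw [h1, List.drop_length_add_append]

lemma drop_app_len {α : Type*} (a b : List α) {t : ℕ} (h : a.length = t) :
    (a ++ b).drop t = b := by
  subst h; exact List.drop_left

/-! ### The partition pieces and the bijection -/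

/-- Pairs counted with prescribed values of the two `lsb`s. -/
def QQ (n i j : ℕ) : Set (List Bool × List Bool) :=
  {p | p.1.length = n ∧ p.2.length = n ∧ MAB p.1 p.2 ∧ lsb p.1 p.2 = j ∧ lsb p.2 p.1 = i}

def AA (n i j : ℕ) : Set (List Bool) := {w | w.length = 2 * n - 2 * i ∧ ShortestAbBorder w j}

def BB (n i : ℕ) : Set (List Bool) := {w | w.length = 2 * i ∧ ShortestAbBorder w i}

/-- Forward map of the bijection. -/
def psiF (n i : ℕ) (p : List Bool × List Bool) : List Bool × List Bool :=
  (p.2.take (n - i) ++ p.1.drop i, p.1.take i ++ p.2.drop (n - i))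

/-- Backward map of the bijection. -/
def phiF (n i : ℕ) (q : List Bool × List Bool) : List Bool × List Bool :=
  (q.2.take i ++ q.1.drop (n - i), q.1.take (n - i) ++ q.2.drop i)

lemma phi_psi {n i : ℕ} {p : List Bool × List Bool} (hu : p.1.length = n)
    (hv : p.2.length = n) (hi : i ≤ n) : phiF n i (psiF n i p) = p := by
  obtain ⟨u, v⟩ := p
  simp only [psiF, phiF] at *
  have h1 : (u.take i ++ v.drop (n - i)).take i = u.take i := by
    rw [List.take_append_of_le_length (by rw [List.length_take]; omega),
      List.take_take, min_self]
  have h2 : (v.take (n - i) ++ u.drop i).drop (n - i) = u.drop i :=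
    drop_app_len _ _ (by rw [List.length_take]; omega)
  have h3 : (v.take (n - i) ++ u.drop i).take (n - i) = v.take (n - i) := by
    rw [List.take_append_of_le_length (by rw [List.length_take]; omega),
      List.take_take, min_self]
  have h4 : (u.take i ++ v.drop (n - i)).drop i = v.drop (n - i) :=
    drop_app_len _ _ (by rw [List.length_take]; omega)
  rw [h1, h2, h3, h4, List.take_append_drop, List.take_append_drop]

lemma psi_phi {n i : ℕ} {q : List Bool × List Bool} (hm : q.1.length = 2 * n - 2 * i)
    (hz : q.2.length = 2 * i) (hi : i ≤ n - 1) (hn : 1 ≤ n) :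
    psiF n i (phiF n i q) = q := by
  obtain ⟨m, z⟩ := q
  simp only [psiF, phiF] at *
  have h1 : (m.take (n - i) ++ z.drop i).take (n - i) = m.take (n - i) := by
    rw [List.take_append_of_le_length (by rw [List.length_take]; omega),
      List.take_take, min_self]
  have h2 : (z.take i ++ m.drop (n - i)).drop i = m.drop (n - i) :=
    drop_app_len _ _ (by rw [List.length_take]; omega)
  have h3 : (z.take i ++ m.drop (n - i)).take i = z.take i := by
    rw [List.take_append_of_le_length (by rw [List.length_take]; omega),
      List.take_take, min_self]
  have h4 : (m.take (n - i) ++ z.drop i).drop (n - i) = z.drop i :=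
    drop_app_len _ _ (by rw [List.length_take]; omega)
  rw [h1, h2, h3, h4, List.take_append_drop, List.take_append_drop]

lemma bijOn_psi {n i j : ℕ} (hn : 2 ≤ n) (hi1 : 1 ≤ i) (hi2 : i ≤ n - 1)
    (hj1 : 1 ≤ j) (hj2 : j ≤ n - i) :
    Set.BijOn (psiF n i) (QQ n i j) (AA n i j ×ˢ BB n i) := by
  have hn1 : 1 ≤ n := by omega
  refine ⟨?_, ?_, ?_⟩
  · -- MapsTo
    rintro ⟨u, v⟩ ⟨hu, hv, hmab, hj, hi⟩
    simp only at hu hv hj hi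
    have hTint : (Tset u v).Nonempty := (hasIntB_iff hu hv hn1).mp hmab.1
    have hText : (Tset v u).Nonempty := (hasExtB_iff hu hv hn1).mp hmab.2
    have hjmem : j ∈ Tset u v := by rw [← hj, lsb_def]; exact Nat.sInf_mem hTint
    have himem : i ∈ Tset v u := by rw [← hi, lsb_def]; exact Nat.sInf_mem hText
    have hjlb : ∀ t ∈ Tset u v, j ≤ t := by
      intro t ht; rw [← hj, lsb_def]; exact Nat.sInf_le ht
    have hilb : ∀ t ∈ Tset v u, i ≤ t := by
      intro t ht; rw [← hi, lsb_def]; exact Nat.sInf_le ht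
    obtain ⟨-, -, habj⟩ := hjmem
    obtain ⟨-, -, habi⟩ := himem
    rw [hu] at habj
    rw [hv] at habi
    -- the two words
    have hmlen : (v.take (n - i) ++ u.drop i).length = 2 * n - 2 * i := by
      rw [List.length_append, List.length_take, List.length_drop, hu, hv]; omega
    have hzlen : (u.take i ++ v.drop (n - i)).length = 2 * i := by
      rw [List.length_append, List.length_take, List.length_drop, hu, hv]; omega
    have hmtake : ∀ t ≤ n - i, (v.take (n - i) ++ u.drop i).take t = v.take t := by
      intro t ht
      rw [List.take_append_of_le_length (by rw [List.length_take]; omega),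
        List.take_take, min_eq_left ht]
    have hmdrop : ∀ t ≤ n - i,
        (v.take (n - i) ++ u.drop i).drop ((v.take (n - i) ++ u.drop i).length - t)
          = u.drop (n - t) := by
      intro t ht
      rw [drop_app_sub (by rw [List.length_drop, hu]; omega), List.length_drop, hu,
        List.drop_drop]
      congr 1; omega
    have hztake : ∀ t ≤ i, (u.take i ++ v.drop (n - i)).take t = u.take t := by
      intro t ht
      rw [List.take_append_of_le_length (by rw [List.length_take]; omega),
        List.take_take, min_eq_left ht]
    have hzdrop : ∀ t ≤ i,
        (u.take i ++ v.drop (n - i)).drop ((u.take i ++ v.drop (n - i)).length - t)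
          = v.drop (n - t) := by
      intro t ht
      rw [drop_app_sub (by rw [List.length_drop, hv]; omega), List.length_drop, hv,
        List.drop_drop]
      congr 1; omega
    simp only [psiF, AA, BB, Set.mem_prod, Set.mem_setOf_eq, ShortestAbBorder]
    constructor
    · -- first component in AA
      refine ⟨hmlen, hj1, by rw [hmlen]; omega, ?_, ?_⟩
      · rw [hmtake j hj2, hmdrop j hj2]
        exact habj.symm'
      · intro t ht1 ht2 hab
        rw [hmtake t (by omega), hmdrop t (by omega)] at hab
        have htm : t ∈ Tset u v := ⟨ht1, by rw [hu]; omega, by rw [hu]; exact hab.symm'⟩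
        have := hjlb t htm; omega
    · -- second component in BB
      refine ⟨hzlen, hi1, by rw [hzlen]; omega, ?_, ?_⟩
      · rw [hztake i le_rfl, hzdrop i le_rfl]
        exact habi.symm'
      · intro t ht1 ht2 hab
        rw [hztake t (by omega), hzdrop t (by omega)] at hab
        have htm : t ∈ Tset v u := ⟨ht1, by rw [hv]; omega, by rw [hv]; exact hab.symm'⟩
        have := hilb t htm; omega
  · -- InjOn
    rintro p hp q hq heq
    have h1 := phi_psi (n := n) (i := i) hp.1 hp.2.1 (by omega)
    have h2 := phi_psi (n := n) (i := i) hq.1 hq.2.1 (by omega)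
    rw [← h1, ← h2, heq]
  · -- SurjOn
    rintro ⟨m, z⟩ ⟨⟨hm, hmb⟩, hz, hzb⟩
    simp only at hm hz
    have hpsi : psiF n i (phiF n i (m, z)) = (m, z) := psi_phi hm hz hi2 hn1
    refine ⟨phiF n i (m, z), ?_, hpsi⟩
    simp only [phiF]
    set u : List Bool := z.take i ++ m.drop (n - i) with hudef
    set v : List Bool := m.take (n - i) ++ z.drop i with hvdef
    have hu : u.length = n := by
      rw [hudef, List.length_append, List.length_take, List.length_drop, hm, hz]; omega
    have hv : v.length = n := by
      rw [hvdef, List.length_append, List.length_take, List.length_drop, hm, hz]; omega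
    have hvt : ∀ t ≤ n - i, v.take t = m.take t := by
      intro t ht
      rw [hvdef, List.take_append_of_le_length (by rw [List.length_take]; omega),
        List.take_take, min_eq_left ht]
    have hud : ∀ t ≤ n - i, u.drop (n - t) = m.drop (m.length - t) := by
      intro t ht
      have he : n - t = (z.take i).length + (n - i - t) := by
        rw [List.length_take]; omega
      rw [hudef, he, List.drop_length_add_append, List.drop_drop]
      congr 1; rw [hm]; omega
    have hut : ∀ t ≤ i, u.take t = z.take t := by
      intro t ht
      rw [hudef, List.take_append_of_le_length (by rw [List.length_take]; omega),
        List.take_take, min_eq_left ht]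
    have hvd : ∀ t ≤ i, v.drop (n - t) = z.drop (z.length - t) := by
      intro t ht
      have he : n - t = (m.take (n - i)).length + (i - t) := by
        rw [List.length_take]; omega
      rw [hvdef, he, List.drop_length_add_append, List.drop_drop]
      congr 1; rw [hz]; omega
    obtain ⟨-, hmb2, hmb3, hmb4⟩ := hmb
    obtain ⟨-, hzb2, hzb3, hzb4⟩ := hzb
    have hjmem : j ∈ Tset u v := by
      refine ⟨hj1, by rw [hu]; omega, ?_⟩
      rw [hu, hud j hj2, hvt j hj2]
      exact hmb3.symm'
    have himem : i ∈ Tset v u := by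
      refine ⟨hi1, by rw [hv]; omega, ?_⟩
      rw [hv, hvd i le_rfl, hut i le_rfl]
      exact hzb3.symm'
    have hjlb : ∀ t ∈ Tset u v, j ≤ t := by
      rintro t ⟨ht1, ht2, hab⟩
      by_contra hlt
      push_neg at hlt
      rw [hu, hud t (by omega), hvt t (by omega)] at hab
      exact hmb4 t ht1 hlt hab.symm'
    have hilb : ∀ t ∈ Tset v u, i ≤ t := by
      rintro t ⟨ht1, ht2, hab⟩
      by_contra hlt
      push_neg at hlt
      rw [hv, hvd t (by omega), hut t (by omega)] at hab
      exact hzb4 t ht1 hlt hab.symm'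
    refine ⟨hu, hv, ⟨?_, ?_⟩, ?_, ?_⟩
    · exact (hasIntB_iff hu hv hn1).mpr ⟨j, hjmem⟩
    · exact (hasExtB_iff hu hv hn1).mpr ⟨i, himem⟩
    · rw [lsb_def]; exact IsLeast.csInf_eq ⟨hjmem, hjlb⟩
    · rw [lsb_def]; exact IsLeast.csInf_eq ⟨himem, hilb⟩

/-! ### Counting lemmas -/

lemma ncard_prod' {α β : Type*} (s : Set α) (t : Set β) :
    (s ×ˢ t).ncard = s.ncard * t.ncard := by
  rw [← Nat.card_coe_set_eq, ← Nat.card_coe_set_eq, ← Nat.card_coe_set_eq,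
    Nat.card_congr (Equiv.Set.prod s t), Nat.card_prod]

lemma ncard_biUnion' {ι α : Type*} [DecidableEq ι] (F : Finset ι) (S : ι → Set α)
    (hfin : ∀ i ∈ F, (S i).Finite)
    (hdisj : ∀ i ∈ F, ∀ j ∈ F, i ≠ j → Disjoint (S i) (S j)) :
    (⋃ i ∈ F, S i).ncard = ∑ i ∈ F, (S i).ncard := by
  induction F using Finset.induction_on with
  | empty => simp
  | @insert a s ha ih =>
    rw [Finset.sum_insert ha]
    have hun : (⋃ i ∈ insert a s, S i) = S a ∪ ⋃ i ∈ s, S i := by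
      simp [Set.biUnion_insert]
    have hfinU : (⋃ i ∈ s, S i).Finite :=
      Set.Finite.biUnion s.finite_toSet fun i hi =>
        hfin i (Finset.mem_insert_of_mem hi)
    have hdisjU : Disjoint (S a) (⋃ i ∈ s, S i) := by
      rw [Set.disjoint_iUnion₂_right]
      intro b hb
      exact hdisj a (Finset.mem_insert_self a s) b (Finset.mem_insert_of_mem hb)
        (fun h => ha (h ▸ hb))
    rw [hun, Set.ncard_union_eq hdisjU (hfin a (Finset.mem_insert_self a s)) hfinU,
      ih (fun i hi => hfin i (Finset.mem_insert_of_mem hi))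
        (fun i hi j hj hne => hdisj i (Finset.mem_insert_of_mem hi) j
          (Finset.mem_insert_of_mem hj) hne)]

theorem stmt_2 (n : ℕ) (hn : 2 ≤ n) :
    {p : List Bool × List Bool | p.1.length = n ∧ p.2.length = n ∧ MAB p.1 p.2 ∧
        lsb p.1 p.2 + lsb p.2 p.1 ≤ n}.ncard
      = ∑ i ∈ Finset.Icc 1 (n - 1), ∑ j ∈ Finset.Icc 1 (n - i),
          D (2 * n - 2 * i) j * D (2 * i) i := by
  classical
  have hn1 : 1 ≤ n := by omega
  set F : Finset ((_ : ℕ) × ℕ) :=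
    (Finset.Icc 1 (n - 1)).sigma (fun i => Finset.Icc 1 (n - i)) with hF
  have hQfin : ∀ i j : ℕ, (QQ n i j).Finite := by
    intro i j
    apply Set.Finite.subset (Set.Finite.prod (List.finite_length_eq Bool n)
      (List.finite_length_eq Bool n))
    rintro ⟨u, v⟩ ⟨h1, h2, -⟩
    exact ⟨h1, h2⟩
  have key : {p : List Bool × List Bool | p.1.length = n ∧ p.2.length = n ∧ MAB p.1 p.2 ∧
      lsb p.1 p.2 + lsb p.2 p.1 ≤ n} = ⋃ x ∈ F, QQ n x.1 x.2 := by
    ext p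
    simp only [Set.mem_setOf_eq, Set.mem_iUnion, hF, Finset.mem_sigma, Finset.mem_Icc,
      exists_prop]
    constructor
    · rintro ⟨hu, hv, hmab, hsum⟩
      have hTint : (Tset p.1 p.2).Nonempty := (hasIntB_iff hu hv hn1).mp hmab.1
      have hText : (Tset p.2 p.1).Nonempty := (hasExtB_iff hu hv hn1).mp hmab.2
      have hjmem : lsb p.1 p.2 ∈ Tset p.1 p.2 := Nat.sInf_mem hTint
      have himem : lsb p.2 p.1 ∈ Tset p.2 p.1 := Nat.sInf_mem hText
      obtain ⟨hj1, hj2, -⟩ := hjmem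
      obtain ⟨hi1, hi2, -⟩ := himem
      rw [hu] at hj2
      rw [hv] at hi2
      exact ⟨⟨lsb p.2 p.1, lsb p.1 p.2⟩,
        ⟨⟨hi1, hi2⟩, hj1, by show lsb p.1 p.2 ≤ n - lsb p.2 p.1; omega⟩,
        hu, hv, hmab, rfl, rfl⟩
    · rintro ⟨⟨i, j⟩, ⟨⟨hi1, hi2⟩, hj1, hj2⟩, hu, hv, hmab, hj, hi⟩
      refine ⟨hu, hv, hmab, ?_⟩
      rw [hj, hi]; omega
  rw [key, ncard_biUnion' F _ (fun x _ => hQfin x.1 x.2) ?_]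
  · rw [hF, Finset.sum_sigma]
    refine Finset.sum_congr rfl fun i hi => Finset.sum_congr rfl fun j hj => ?_
    rw [Finset.mem_Icc] at hi hj
    have hb := bijOn_psi (n := n) (i := i) (j := j) hn hi.1 hi.2 hj.1 hj.2
    calc (QQ n i j).ncard = (psiF n i '' QQ n i j).ncard :=
          (Set.ncard_image_of_injOn hb.2.1).symm
      _ = (AA n i j ×ˢ BB n i).ncard := by rw [hb.image_eq]
      _ = (AA n i j).ncard * (BB n i).ncard := ncard_prod' _ _
      _ = D (2 * n - 2 * i) j * D (2 * i) i := rfl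
  · intro x hx y hy hne
    rw [Set.disjoint_left]
    rintro p ⟨-, -, -, hj1, hi1⟩ ⟨-, -, -, hj2, hi2⟩
    apply hne
    obtain ⟨x1, x2⟩ := x
    obtain ⟨y1, y2⟩ := y
    simp only at hj1 hi1 hj2 hi2
    rw [← hi1, ← hj1, hi2, hj2]
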